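/- arXiv:2207.03974 — 3 statements merged into one kernel-verified Lean document; each statement's English description precedes it below -/
import Mathlib

section
/- For all integers n and ℓ with n - 1 > ℓ ≥ 2, sat*(n, ∧_{ℓ+1}) ≤ n + 2^{ℓ+1} - ℓ - 1. Specifically, the family consisting of ∅, all singletons {i} for i ∈ [n], all subsets of {1,...,ℓ}, and all proper supersets of [n] \ {1,...,ℓ} is induced ∧_{ℓ+1}-saturated of this size. -/
/-- `φ` is an induced-copy map of the poset `P` into the family `F`
(posets are finite collections of finite subsets of `ℕ`, ordered by inclusion). -/
def IsCopyMap (P F : Finset (Finset ℕ)) (φ : Finset ℕ → Finset ℕ) : Prop :=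
  Set.InjOn φ ↑P ∧ (∀ A ∈ P, φ A ∈ F) ∧ ∀ A ∈ P, ∀ B ∈ P, (φ A ⊆ φ B ↔ A ⊆ B)

/-- `F` contains an induced copy of the poset `P`. -/
def ContainsInduced (P F : Finset (Finset ℕ)) : Prop := ∃ φ, IsCopyMap P F φ

/-- `F ⊆ 2^[n]` is induced `P`-saturated. -/
def InducedSaturated (n : ℕ) (P F : Finset (Finset ℕ)) : Prop :=
  (∀ A ∈ F, A ⊆ Finset.Icc 1 n) ∧ ¬ ContainsInduced P F ∧
  ∀ S ⊆ Finset.Icc 1 n, S ∉ F → ContainsInduced P (insert S F)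

/-- `P` has legs `L1, L2` and hip `H`. -/
def LegsAt (P : Finset (Finset ℕ)) (L1 L2 H : Finset ℕ) : Prop :=
  L1 ∈ P ∧ L2 ∈ P ∧ H ∈ P ∧ L1 ≠ L2 ∧ L1 ≠ H ∧ L2 ≠ H ∧
  ¬ L1 ⊆ L2 ∧ ¬ L2 ⊆ L1 ∧ L1 ⊆ H ∧ L2 ⊆ H ∧
  ∀ A ∈ P, A ≠ L1 → A ≠ L2 → A ≠ H → H ⊆ A

/-- `P` has legs. -/
def HasLegs (P : Finset (Finset ℕ)) : Prop := ∃ L1 L2 H, LegsAt P L1 L2 H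

/-- `sat*(n, P)`: the minimum size of an induced `P`-saturated family in `2^[n]`. -/
noncomputable def satStar (n : ℕ) (P : Finset (Finset ℕ)) : ℕ :=
  sInf {k | ∃ F : Finset (Finset ℕ), InducedSaturated n P F ∧ F.card = k}

/-- The poset `∧_ℓ`: legs `{1}, {2}` below the chain `{1,2,3} ⊂ {1,2,3,4} ⊂ … ⊂ {1,…,ℓ+2}`
of length `ℓ`. -/
def wedgePoset (l : ℕ) : Finset (Finset ℕ) :=
  insert {1} (insert {2} ((Finset.range l).image fun j => Finset.Icc 1 (j + 3)))

/-- The family: `∅`, all singletons `{i}` for `i ∈ [n]`, all subsets of `{1,…,ℓ}`,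
and all proper supersets of `[n] \ {1,…,ℓ}`. -/
def wedgeFamily (n l : ℕ) : Finset (Finset ℕ) :=
  insert ∅ (((Finset.Icc 1 n).image fun i => ({i} : Finset ℕ)) ∪
    (Finset.Icc 1 l).powerset ∪
    ((Finset.Icc 1 n).powerset.filter fun T => Finset.Icc (l + 1) n ⊂ T))

/-!
An induced copy of `∧_{ℓ+1}` amounts to a strict chain of `ℓ + 1` sets whose bottom has two
distinct points `p, q` (one from each leg); conversely such a chain gives a copy as soon as `{p}`
and `{q}` are present. Every member of the family with at least two points is a subset of `[ℓ]`
or a proper superset of `[n] \ [ℓ]`, and on these sets `X ↦ X ∩ [ℓ + 1]` is strictly monotone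
with values of size between `2` and `ℓ + 1`, so they carry no chain of `ℓ + 1` sets. A missing set
`S` closes such a chain: below `S`, a saturated chain from two points of `S ∩ [ℓ]` up to
`S ∩ [ℓ]` (when `|S ∩ [ℓ]| ≥ 2`); above `S`, a saturated chain up to `[n]` starting at
`S ∪ ([n] \ [ℓ])`, or at `([n] \ [ℓ]) ∪ {a}` when `S ∩ [ℓ] ⊆ {a}`.
-/

open Finset

theorem Finset.exists_pairwise_ssubset_list {α : Type*} [DecidableEq α] {A B : Finset α}
    (h : A ⊆ B) : ∃ cs : List (Finset α), cs.length = #(B \ A) + 1 ∧ cs.Pairwise (· ⊂ ·) ∧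
      ∀ X ∈ cs, A ⊆ X ∧ X ⊆ B := by
  induction hk : #(B \ A) generalizing A with
  | zero => exact ⟨[A], rfl, List.pairwise_singleton _ _, by simpa using h⟩
  | succ k ih =>
    obtain ⟨b, hb⟩ : (B \ A).Nonempty := card_pos.mp (by omega)
    rw [mem_sdiff] at hb
    obtain ⟨cs, hlen, hc, hcAB⟩ := ih (insert_subset hb.1 h)
      (by rw [sdiff_insert, card_erase_of_mem (mem_sdiff.mpr hb), hk, Nat.add_sub_cancel])
    refine ⟨A :: cs, by simp [hlen], List.pairwise_cons.mpr ⟨fun X hX => ?_, hc⟩, ?_⟩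
    · exact ssubset_of_ssubset_of_subset (ssubset_insert hb.2) (hcAB X hX).1
    · simp only [List.mem_cons, forall_eq_or_imp]
      exact ⟨⟨subset_rfl, h⟩, fun X hX => ⟨(subset_insert b A).trans (hcAB X hX).1, (hcAB X hX).2⟩⟩

theorem List.length_le_of_pairwise_ssubset {α : Type*} {cs : List (Finset α)}
    (hc : cs.Pairwise (· ⊂ ·)) {a b : ℕ} (hcard : ∀ X ∈ cs, a ≤ #X ∧ #X ≤ b) :
    cs.length ≤ b + 1 - a := by
  have hnodup : (cs.map card).Nodup :=
    List.pairwise_map.mpr (hc.imp fun hXY => (card_lt_card hXY).ne)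
  calc cs.length = #(cs.map card).toFinset := by rw [List.toFinset_card_of_nodup hnodup, length_map]
    _ ≤ #(Icc a b) := card_le_card fun m hm => by
        obtain ⟨X, hX, rfl⟩ := List.mem_map.mp (List.mem_toFinset.mp hm)
        exact mem_Icc.mpr (hcard X hX)
    _ = b + 1 - a := Nat.card_Icc a b

theorem List.Pairwise.getElem_subset_getElem_iff {α : Type*} {cs : List (Finset α)}
    (hc : cs.Pairwise (· ⊂ ·)) {i j : ℕ} (hi : i < cs.length) (hj : j < cs.length) :
    cs[i] ⊆ cs[j] ↔ i ≤ j := by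
  have hlt {i j} (hi : i < cs.length) (hj : j < cs.length) (hij : i < j) : cs[i] ⊂ cs[j] :=
    List.pairwise_iff_getElem.mp hc i j hi hj hij
  refine ⟨fun hsub => not_lt.mp fun hji => (hlt hj hi hji).not_subset hsub, fun hij => ?_⟩
  rcases hij.lt_or_eq with hij | rfl
  exacts [(hlt hi hj hij).subset, subset_rfl]

theorem containsInduced_of_subset_iff {P F : Finset (Finset ℕ)} {φ : Finset ℕ → Finset ℕ}
    (hmem : ∀ A ∈ P, φ A ∈ F) (hiff : ∀ A ∈ P, ∀ B ∈ P, φ A ⊆ φ B ↔ A ⊆ B) :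
    ContainsInduced P F :=
  ⟨φ, fun A hA B hB hAB => ((hiff A hA B hB).1 hAB.subset).antisymm
    ((hiff B hB A hA).1 hAB.symm.subset), hmem, hiff⟩

theorem mem_wedgePoset {k : ℕ} {A : Finset ℕ} :
    A ∈ wedgePoset k ↔ A = {1} ∨ A = {2} ∨ ∃ j < k, Icc 1 (j + 3) = A := by
  simp [wedgePoset]

theorem ContainsInduced.exists_chain {F : Finset (Finset ℕ)} {k : ℕ}
    (h : ContainsInduced (wedgePoset (k + 1)) F) :
    ∃ cs : List (Finset ℕ), cs.length = k + 1 ∧ cs.Pairwise (· ⊂ ·) ∧ ∀ X ∈ cs, X ∈ F ∧ 1 < #X := by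
  obtain ⟨φ, -, hmem, hiff⟩ := h
  have h1 : {1} ∈ wedgePoset (k + 1) := mem_wedgePoset.mpr (.inl rfl)
  have h2 : {2} ∈ wedgePoset (k + 1) := mem_wedgePoset.mpr (.inr (.inl rfl))
  have hI {j} (hj : j < k + 1) : Icc 1 (j + 3) ∈ wedgePoset (k + 1) :=
    mem_wedgePoset.mpr (.inr (.inr ⟨j, hj, rfl⟩))
  obtain ⟨u, hu1, hu2⟩ := not_subset.mp ((hiff _ h1 _ h2).not.mpr (by simp))
  obtain ⟨v, hv2, hv1⟩ := not_subset.mp ((hiff _ h2 _ h1).not.mpr (by simp))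
  refine ⟨(List.range (k + 1)).map fun j => φ (Icc 1 (j + 3)), by simp, ?_, ?_⟩
  · refine List.pairwise_map.mpr (List.pairwise_lt_range.imp_of_mem fun hi hj hij => ?_)
    rw [List.mem_range] at hi hj
    refine ssubset_of_subset_not_subset ((hiff _ (hI hi) _ (hI hj)).mpr ?_)
      ((hiff _ (hI hj) _ (hI hi)).not.mpr ?_)
    · exact Icc_subset_Icc le_rfl (by omega)
    · rw [Icc_subset_Icc_iff (by omega)]
      omega
  · simp only [List.mem_map, List.mem_range]
    rintro _ ⟨j, hj, rfl⟩
    have hleg {A} (hA : A ∈ wedgePoset (k + 1)) (hA' : A ⊆ Icc 1 (j + 3)) :=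
      (hiff _ hA _ (hI hj)).mpr hA'
    exact ⟨hmem _ (hI hj), one_lt_card.mpr ⟨u, hleg h1 (by simp) hu1, v, hleg h2 (by simp) hv2,
      fun huv => hv1 (huv ▸ hu1)⟩⟩

theorem containsInduced_wedgePoset_of_chain {F : Finset (Finset ℕ)} {k p q : ℕ}
    {cs : List (Finset ℕ)} (hlen : k < cs.length) (hc : cs.Pairwise (· ⊂ ·))
    (hcF : ∀ X ∈ cs, X ∈ F ∧ p ∈ X ∧ q ∈ X) (hpq : p ≠ q) (hp : {p} ∈ F) (hq : {q} ∈ F) :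
    ContainsInduced (wedgePoset (k + 1)) F := by
  let φ (A : Finset ℕ) : Finset ℕ :=
    if A = {1} then {p} else if A = {2} then {q} else cs.getD (#A - 3) ∅
  have hφ (j : ℕ) : φ (Icc 1 (j + 3)) = cs.getD j ∅ := by
    have hcard : #(Icc 1 (j + 3)) = j + 3 := by simp
    have h1 : Icc 1 (j + 3) ≠ {1} := fun h => by simp [h] at hcard
    have h2 : Icc 1 (j + 3) ≠ {2} := fun h => by simp [h] at hcard
    simp only [φ, if_neg h1, if_neg h2, hcard, Nat.add_sub_cancel]
  have hφ1 : φ {1} = {p} := if_pos rfl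
  have hφ2 : φ {2} = {q} := by simp [φ]
  have hmem {j} (hj : j < k + 1) : cs.getD j ∅ ∈ cs := by
    rw [List.getD_eq_getElem _ _ (by omega)]
    exact List.getElem_mem _
  have hpqX {j} (hj : j < k + 1) := (hcF _ (hmem hj)).2
  have hchain {i j} (hi : i < k + 1) (hj : j < k + 1) :
      cs.getD i ∅ ⊆ cs.getD j ∅ ↔ Icc 1 (i + 3) ⊆ Icc 1 (j + 3) := by
    rw [List.getD_eq_getElem _ _ (by omega), List.getD_eq_getElem _ _ (by omega),
      hc.getElem_subset_getElem_iff, Icc_subset_Icc_iff (by omega)]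
    omega
  refine containsInduced_of_subset_iff (φ := φ) ?_ ?_
  · intro A hA
    rcases mem_wedgePoset.mp hA with rfl | rfl | ⟨j, hj, rfl⟩
    · simpa [φ] using hp
    · simpa [φ] using hq
    · simpa only [hφ] using (hcF _ (hmem hj)).1
  · intro A hA B hB
    have hIcc {j} : ¬ Icc 1 (j + 3) ⊆ {1} ∧ ¬ Icc 1 (j + 3) ⊆ {2} := by
      constructor <;> intro h
      exacts [absurd (h (by simp : 2 ∈ Icc 1 (j + 3))) (by simp),
        absurd (h (by simp : 1 ∈ Icc 1 (j + 3))) (by simp)]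
    rcases mem_wedgePoset.mp hA with rfl | rfl | ⟨i, hi, rfl⟩ <;>
      rcases mem_wedgePoset.mp hB with rfl | rfl | ⟨j, hj, rfl⟩ <;>
      simp only [hφ1, hφ2, hφ, singleton_subset_iff, mem_singleton, subset_rfl]
    · exact iff_of_false hpq (by decide)
    · exact iff_of_true (hpqX hj).1 (by simp)
    · exact iff_of_false hpq.symm (by decide)
    · exact iff_of_true (hpqX hj).2 (by simp)
    · exact iff_of_false (fun h => hpq (mem_singleton.mp (h (hpqX hi).2)).symm) hIcc.1
    · exact iff_of_false (fun h => hpq (mem_singleton.mp (h (hpqX hi).1))) hIcc.2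
    · exact hchain hi hj

def IsLowerOrUpper (n l : ℕ) (X : Finset ℕ) : Prop :=
  X ⊆ Icc 1 l ∨ (X ⊆ Icc 1 n ∧ Icc (l + 1) n ⊂ X)

section WedgeFamily

variable {n l : ℕ}

theorem mem_wedgeFamily {X : Finset ℕ} :
    X ∈ wedgeFamily n l ↔ X = ∅ ∨ (∃ i ∈ Icc 1 n, {i} = X) ∨ X ⊆ Icc 1 l ∨
      (X ⊆ Icc 1 n ∧ Icc (l + 1) n ⊂ X) := by
  simp only [wedgeFamily, mem_insert, mem_union, mem_image, mem_powerset, mem_filter, or_assoc]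

theorem subset_Icc_of_mem_wedgeFamily (hln : l ≤ n) {X : Finset ℕ} (hX : X ∈ wedgeFamily n l) :
    X ⊆ Icc 1 n := by
  rcases mem_wedgeFamily.mp hX with rfl | ⟨i, hi, rfl⟩ | hX | hX
  exacts [empty_subset _, singleton_subset_iff.mpr hi, hX.trans (Icc_subset_Icc_right hln), hX.1]

theorem wedgeFamily_eq_union :
    wedgeFamily n l = (Icc 1 l).powerset ∪ (Icc (l + 1) n).map ⟨singleton, singleton_injective⟩ ∪
      Ioc (Icc (l + 1) n) (Icc 1 n) := by
  ext X
  simp only [mem_wedgeFamily, mem_union, mem_powerset, mem_map, Function.Embedding.coeFn_mk,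
    Finset.mem_Ioc]
  constructor
  · rintro (rfl | ⟨i, hi, rfl⟩ | hX | ⟨hXn, hIX⟩)
    · exact .inl (.inl (empty_subset _))
    · by_cases hil : i ≤ l
      · exact .inl (.inl (singleton_subset_iff.mpr (mem_Icc.mpr ⟨(mem_Icc.mp hi).1, hil⟩)))
      · exact .inl (.inr ⟨i, mem_Icc.mpr ⟨by omega, (mem_Icc.mp hi).2⟩, rfl⟩)
    · exact .inl (.inl hX)
    · exact .inr ⟨hIX, hXn⟩
  · rintro ((hX | ⟨i, hi, rfl⟩) | ⟨hIX, hXn⟩)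
    · exact .inr (.inr (.inl hX))
    · have := mem_Icc.mp hi
      exact .inr (.inl ⟨i, mem_Icc.mpr ⟨by omega, this.2⟩, rfl⟩)
    · exact .inr (.inr (.inr ⟨hXn, hIX⟩))

theorem card_wedgeFamily (hn : l < n) : #(wedgeFamily n l) = n + 2 ^ (l + 1) - l - 1 := by
  have hlI : l + 1 ∈ Icc (l + 1) n := mem_Icc.mpr ⟨le_rfl, hn⟩
  have hdisj₁ :
      Disjoint (Icc 1 l).powerset ((Icc (l + 1) n).map ⟨singleton, singleton_injective⟩) := by
    refine disjoint_left.mpr fun X hXL hXI => ?_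
    obtain ⟨i, hi, rfl⟩ := mem_map.mp hXI
    have := mem_Icc.mp (singleton_subset_iff.mp (mem_powerset.mp hXL))
    have := mem_Icc.mp hi
    omega
  have hdisj₂ : Disjoint ((Icc 1 l).powerset ∪ (Icc (l + 1) n).map ⟨singleton, singleton_injective⟩)
      (Ioc (Icc (l + 1) n) (Icc 1 n)) := by
    refine disjoint_right.mpr fun X hX hX' => ?_
    have hIX : Icc (l + 1) n ⊂ X := (Finset.mem_Ioc.mp hX).1
    rcases mem_union.mp hX' with hXL | hXI
    · simpa using mem_powerset.mp hXL (hIX.subset hlI)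
    · obtain ⟨i, -, rfl⟩ := mem_map.mp hXI
      exact Nonempty.ne_empty ⟨l + 1, hlI⟩ (ssubset_singleton_iff.mp hIX)
  rw [wedgeFamily_eq_union, card_union_of_disjoint hdisj₂, card_union_of_disjoint hdisj₁,
    card_powerset, card_map, card_Ioc_finset (Icc_subset_Icc_left (by omega))]
  simp only [Nat.card_Icc, Nat.add_sub_cancel, show n - (n + 1 - (l + 1)) = l by omega]
  have : 0 < 2 ^ l := by positivity
  rw [pow_succ]
  omega

theorem IsLowerOrUpper.mem_wedgeFamily {X : Finset ℕ} (hX : IsLowerOrUpper n l X) :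
    X ∈ wedgeFamily n l :=
  _root_.mem_wedgeFamily.mpr (.inr (.inr hX))

theorem isLowerOrUpper_of_mem_wedgeFamily {X : Finset ℕ} (hX : X ∈ wedgeFamily n l)
    (hcard : 1 < #X) : IsLowerOrUpper n l X := by
  rcases mem_wedgeFamily.mp hX with rfl | ⟨i, -, rfl⟩ | hX
  · simp at hcard
  · simp at hcard
  · exact hX

theorem IsLowerOrUpper.mem_iff {X : Finset ℕ} (hX : IsLowerOrUpper n l X) {y : ℕ} :
    y ∈ X ↔ y ∈ X ∩ Icc 1 (l + 1) ∨ (l + 1 ∈ X ∩ Icc 1 (l + 1) ∧ y ∈ Icc (l + 1) n) := by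
  rcases hX with hX | ⟨hXn, hIX⟩
  · have := @hX y
    have := @hX (l + 1)
    simp only [mem_inter, mem_Icc] at *
    grind
  · have := @hXn y
    have : l + 1 ∈ Icc (l + 1) n → l + 1 ∈ X := fun h => hIX.subset h
    simp only [mem_inter, mem_Icc] at *
    grind

theorem IsLowerOrUpper.inter_Icc_ssubset_inter_Icc {X Y : Finset ℕ} (hX : IsLowerOrUpper n l X)
    (hY : IsLowerOrUpper n l Y) (hXY : X ⊂ Y) : X ∩ Icc 1 (l + 1) ⊂ Y ∩ Icc 1 (l + 1) := by
  refine Finset.ssubset_iff_subset_ne.mpr ⟨inter_subset_inter_right hXY.subset, fun h => hXY.ne ?_⟩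
  ext y
  rw [hX.mem_iff, hY.mem_iff, h]

theorem IsLowerOrUpper.two_le_card_inter_Icc (hn : l < n) {X : Finset ℕ}
    (hX : IsLowerOrUpper n l X) (hcard : 1 < #X) : 2 ≤ #(X ∩ Icc 1 (l + 1)) := by
  rcases hX with hX | ⟨hXn, hIX⟩
  · rwa [inter_eq_left.mpr (hX.trans (Icc_subset_Icc_right l.le_succ))]
  · obtain ⟨x, hxX, hxI⟩ := exists_of_ssubset hIX
    have hx := mem_Icc.mp (hXn hxX)
    refine one_lt_card.mpr ⟨x, ?_, l + 1, ?_, ?_⟩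
    · exact mem_inter.mpr ⟨hxX, mem_Icc.mpr ⟨hx.1, by simp at hxI; omega⟩⟩
    · exact mem_inter.mpr ⟨hIX.subset (mem_Icc.mpr ⟨le_rfl, hn⟩), mem_Icc.mpr ⟨by omega, le_rfl⟩⟩
    · simp at hxI
      omega

theorem not_containsInduced_wedgeFamily (hn : l < n) :
    ¬ ContainsInduced (wedgePoset (l + 1)) (wedgeFamily n l) := by
  intro h
  obtain ⟨cs, hlen, hc, hcF⟩ := h.exists_chain
  have hlu {X} (hX : X ∈ cs) : IsLowerOrUpper n l X :=
    isLowerOrUpper_of_mem_wedgeFamily (hcF X hX).1 (hcF X hX).2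
  have hbound := List.length_le_of_pairwise_ssubset (a := 2) (b := l + 1)
    (cs := cs.map (· ∩ Icc 1 (l + 1)))
    (List.pairwise_map.mpr (hc.imp_of_mem fun hX hY hXY =>
      (hlu hX).inter_Icc_ssubset_inter_Icc (hlu hY) hXY))
    (by
      simp only [List.mem_map]
      rintro _ ⟨X, hX, rfl⟩
      exact ⟨(hlu hX).two_le_card_inter_Icc hn (hcF X hX).2,
        (card_le_card inter_subset_right).trans (Nat.card_Icc 1 (l + 1)).le⟩)
  rw [List.length_map] at hbound
  omega

theorem containsInduced_insert_wedgeFamily_of_chain {S U : Finset ℕ} {E : List (Finset ℕ)}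
    {p q : ℕ} (hpq : p ≠ q) (hpS : p ∈ S) (hqS : q ∈ S) (hSn : S ⊆ Icc 1 n)
    (hE : E.Pairwise (· ⊂ ·)) (hEmem : ∀ X ∈ E, X ⊆ Icc 1 l ∧ X ⊂ S ∧ p ∈ X ∧ q ∈ X)
    (hIU : Icc (l + 1) n ⊂ U) (hUn : U ⊆ Icc 1 n) (hSU : S ⊂ U)
    (hlen : l ≤ E.length + #(Icc 1 n \ U) + 1) :
    ContainsInduced (wedgePoset (l + 1)) (insert S (wedgeFamily n l)) := by
  obtain ⟨D, hDlen, hD, hDmem⟩ := exists_pairwise_ssubset_list hUn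
  have hSD {Y} (hY : Y ∈ D) : S ⊂ Y := hSU.trans_subset (hDmem Y hY).1
  have hsingleton {i} (hi : i ∈ S) : {i} ∈ insert S (wedgeFamily n l) :=
    mem_insert_of_mem (mem_wedgeFamily.mpr (.inr (.inl ⟨i, hSn hi, rfl⟩)))
  refine containsInduced_wedgePoset_of_chain (cs := E ++ S :: D) (by simp; omega)
    (List.pairwise_append.mpr ⟨hE, List.pairwise_cons.mpr ⟨fun Y hY => hSD hY, hD⟩, ?_⟩)
    ?_ hpq (hsingleton hpS) (hsingleton hqS)
  · intro X hX Y hY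
    rcases List.mem_cons.mp hY with rfl | hY
    exacts [(hEmem X hX).2.1, (hEmem X hX).2.1.trans (hSD hY)]
  · intro X hX
    rcases List.mem_append.mp hX with hX | hX
    · obtain ⟨hXL, -, hpX, hqX⟩ := hEmem X hX
      exact ⟨mem_insert_of_mem (IsLowerOrUpper.mem_wedgeFamily (.inl hXL)), hpX, hqX⟩
    rcases List.mem_cons.mp hX with rfl | hX
    · exact ⟨mem_insert_self _ _, hpS, hqS⟩
    · exact ⟨mem_insert_of_mem (IsLowerOrUpper.mem_wedgeFamily
        (.inr ⟨(hDmem X hX).2, hIU.trans_subset (hDmem X hX).1⟩)), (hSD hX).subset hpS,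
        (hSD hX).subset hqS⟩

theorem nontrivial_of_not_mem_wedgeFamily {S : Finset ℕ} (hSn : S ⊆ Icc 1 n)
    (hSF : S ∉ wedgeFamily n l) : S.Nontrivial := by
  rcases (nonempty_iff_ne_empty.mpr fun h => hSF (mem_wedgeFamily.mpr (.inl h))
    ).exists_eq_singleton_or_nontrivial with ⟨i, rfl⟩ | h
  · exact absurd (mem_wedgeFamily.mpr (.inr (.inl ⟨i, hSn (mem_singleton_self i), rfl⟩))) hSF
  · exact h

theorem containsInduced_insert_wedgeFamily_of_card_inter_le_one (hl : 1 ≤ l) (hn : l < n)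
    {S : Finset ℕ} (hSn : S ⊆ Icc 1 n) (hSF : S ∉ wedgeFamily n l)
    (hs : #(S ∩ Icc 1 l) ≤ 1) :
    ContainsInduced (wedgePoset (l + 1)) (insert S (wedgeFamily n l)) := by
  obtain ⟨a, haL, hTa⟩ : ∃ a ∈ Icc 1 l, S ∩ Icc 1 l ⊆ {a} := by
    rcases (S ∩ Icc 1 l).eq_empty_or_nonempty with hT | ⟨a, ha⟩
    · exact ⟨1, mem_Icc.mpr ⟨le_rfl, hl⟩, hT.subset.trans (empty_subset _)⟩
    · exact ⟨a, inter_subset_right ha, fun b hb => mem_singleton.mpr (card_le_one.mp hs b hb a ha)⟩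
  obtain ⟨p, hp, q, hq, hpq⟩ := nontrivial_of_not_mem_wedgeFamily hSn hSF
  have haI : a ∉ Icc (l + 1) n := fun h => by
    have := mem_Icc.mp haL
    have := mem_Icc.mp h
    omega
  have hIU : Icc (l + 1) n ⊂ insert a (Icc (l + 1) n) := ssubset_insert haI
  have hUn : insert a (Icc (l + 1) n) ⊆ Icc 1 n :=
    insert_subset (Icc_subset_Icc_right hn.le haL) (Icc_subset_Icc_left (by omega))
  have hSU : S ⊆ insert a (Icc (l + 1) n) := by
    intro y hy
    have hy' := mem_Icc.mp (hSn hy)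
    by_cases hyl : y ≤ l
    · have hyT : y ∈ S ∩ Icc 1 l := mem_inter.mpr ⟨hy, mem_Icc.mpr ⟨hy'.1, hyl⟩⟩
      exact mem_singleton.mp (hTa hyT) ▸ mem_insert_self _ _
    · exact mem_insert_of_mem (mem_Icc.mpr ⟨by omega, hy'.2⟩)
  refine containsInduced_insert_wedgeFamily_of_chain hpq hp hq hSn List.Pairwise.nil (by simp)
    hIU hUn (ssubset_of_subset_of_ne hSU fun h =>
      hSF (h ▸ IsLowerOrUpper.mem_wedgeFamily (.inr ⟨hUn, hIU⟩))) ?_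
  have hsub : (Icc 1 l).erase a ⊆ Icc 1 n \ insert a (Icc (l + 1) n) := by
    intro y hy
    simp only [mem_erase, mem_sdiff, mem_insert, mem_Icc] at hy ⊢
    omega
  have := card_le_card hsub
  rw [card_erase_of_mem haL, Nat.card_Icc] at this
  simp only [List.length_nil]
  omega

theorem containsInduced_insert_wedgeFamily_of_one_lt_card_inter (hn : l < n) {S : Finset ℕ}
    (hSn : S ⊆ Icc 1 n) (hSF : S ∉ wedgeFamily n l) (hs : 1 < #(S ∩ Icc 1 l)) :
    ContainsInduced (wedgePoset (l + 1)) (insert S (wedgeFamily n l)) := by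
  have hTL : S ∩ Icc 1 l ⊆ Icc 1 l := inter_subset_right
  have hTS : S ∩ Icc 1 l ⊂ S := ssubset_of_subset_of_ne inter_subset_left fun h =>
    hSF (mem_wedgeFamily.mpr (.inr (.inr (.inl (h ▸ hTL)))))
  obtain ⟨p, hp, q, hq, hpq⟩ := one_lt_card.mp hs
  have hpqT : {p, q} ⊆ S ∩ Icc 1 l := insert_subset hp (singleton_subset_iff.mpr hq)
  obtain ⟨E, hElen, hE, hEmem⟩ := exists_pairwise_ssubset_list hpqT
  have hIU : Icc (l + 1) n ⊂ S ∪ Icc (l + 1) n := by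
    refine (ssubset_iff_of_subset subset_union_right).mpr
      ⟨p, mem_union_left _ (mem_of_mem_inter_left hp), ?_⟩
    have := mem_Icc.mp (mem_of_mem_inter_right hp)
    simp only [mem_Icc]
    omega
  have hUn : S ∪ Icc (l + 1) n ⊆ Icc 1 n := union_subset hSn (Icc_subset_Icc_left (by omega))
  refine containsInduced_insert_wedgeFamily_of_chain hpq (mem_of_mem_inter_left hp)
    (mem_of_mem_inter_left hq) hSn hE (fun X hX => ?_) hIU hUn
    (ssubset_of_subset_of_ne subset_union_left fun h =>
      hSF (h ▸ IsLowerOrUpper.mem_wedgeFamily (.inr ⟨hUn, hIU⟩))) ?_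
  · obtain ⟨hpqX, hXT⟩ := hEmem X hX
    exact ⟨hXT.trans hTL, hXT.trans_ssubset hTS, hpqX (mem_insert_self _ _),
      hpqX (mem_insert_of_mem (mem_singleton_self _))⟩
  · have hsub : Icc 1 l \ (S ∩ Icc 1 l) ⊆ Icc 1 n \ (S ∪ Icc (l + 1) n) := by
      intro y hy
      simp only [mem_inter, mem_union, mem_sdiff, mem_Icc] at hy ⊢
      grind
    have := card_le_card hsub
    rw [card_sdiff_of_subset hTL, Nat.card_Icc] at this
    rw [hElen, card_sdiff_of_subset hpqT, card_pair hpq]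
    omega

theorem containsInduced_insert_wedgeFamily (hl : 1 ≤ l) (hn : l < n) {S : Finset ℕ}
    (hSn : S ⊆ Icc 1 n) (hSF : S ∉ wedgeFamily n l) :
    ContainsInduced (wedgePoset (l + 1)) (insert S (wedgeFamily n l)) := by
  rcases le_or_gt #(S ∩ Icc 1 l) 1 with hs | hs
  exacts [containsInduced_insert_wedgeFamily_of_card_inter_le_one hl hn hSn hSF hs,
    containsInduced_insert_wedgeFamily_of_one_lt_card_inter hn hSn hSF hs]

end WedgeFamily

/-- For `n - 1 > ℓ ≥ 2`, the family above is induced `∧_{ℓ+1}`-saturated of size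
`n + 2^{ℓ+1} - ℓ - 1`; hence `sat*(n, ∧_{ℓ+1}) ≤ n + 2^{ℓ+1} - ℓ - 1`. -/
theorem wedge_saturated_upper_bound (n l : ℕ) (hl : 2 ≤ l) (hn : l < n - 1) :
    InducedSaturated n (wedgePoset (l + 1)) (wedgeFamily n l) ∧
    (wedgeFamily n l).card = n + 2 ^ (l + 1) - l - 1 ∧
    satStar n (wedgePoset (l + 1)) ≤ n + 2 ^ (l + 1) - l - 1 := by
  have hln : l < n := by omega
  have hsat : InducedSaturated n (wedgePoset (l + 1)) (wedgeFamily n l) :=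
    ⟨fun _ => subset_Icc_of_mem_wedgeFamily hln.le, not_containsInduced_wedgeFamily hln,
      fun _ hS hSF => containsInduced_insert_wedgeFamily (by omega) hln hS hSF⟩
  exact ⟨hsat, card_wedgeFamily hln, Nat.sInf_le ⟨_, hsat, card_wedgeFamily hln⟩⟩
end

section
/- Let D be a digraph that contains an induced oriented cycle C, and suppose D contains no transitive cycle TC_k for any k ≥ 3. Then every vertex v ∈ V(D) \ V(C) has at most one in-edge from V(C) and at most one out-edge to V(C). -/
/-!
If `v ∉ C` had two in-neighbours `c i ≠ c j` on `C`, then walking along `C` from `c j` to `c i`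
and stepping on to `v` gives a path `c j → ⋯ → c i → v` on at least three vertices whose ends are
joined by the edge `c j → v`: a transitive cycle. Dually, two out-neighbours `c i ≠ c j` give the
path `v → c i → ⋯ → c j` closed up by `v → c j`.
-/

section

variable {V : Type*} {E : V → V → Prop}

def IsDipath (E : V → V → Prop) (n : ℕ) (ψ : ℕ → V) : Prop :=
  Set.InjOn ψ (Set.Iio n) ∧ ∀ i, i + 1 < n → E (ψ i) (ψ (i + 1))

def IsTransitiveCycle (E : V → V → Prop) (k : ℕ) (φ : ℕ → V) : Prop :=
  IsDipath E k φ ∧ E (φ 0) (φ (k - 1))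

def seqCons (v : V) (ψ : ℕ → V) : ℕ → V
  | 0 => v
  | t + 1 => ψ t

namespace IsDipath

section Extend

variable {n : ℕ} {ψ : ℕ → V} {v : V}

theorem snoc (hψ : IsDipath E n ψ) (hv : v ∉ ψ '' Set.Iio n) (hlast : E (ψ (n - 1)) v) :
    IsDipath E (n + 1) (Function.update ψ n v) := by
  refine ⟨fun a ha b hb hab => ?_, fun i hi => ?_⟩
  · simp only [Set.mem_Iio, Function.update_apply] at ha hb hab
    split_ifs at hab with han hbn hbn
    · omega
    · exact absurd ⟨b, by simp; omega, hab.symm⟩ hv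
    · exact absurd ⟨a, by simp; omega, hab⟩ hv
    · exact hψ.1 (by simp; omega) (by simp; omega) hab
  · rcases Nat.lt_or_ge (i + 1) n with h | h
    · simpa [Function.update_apply, show i ≠ n by omega, show i + 1 ≠ n by omega] using hψ.2 i h
    · obtain rfl : i = n - 1 := by omega
      simpa [Function.update_apply, show n - 1 ≠ n by omega, show n - 1 + 1 = n by omega]
        using hlast

theorem cons (hψ : IsDipath E n ψ) (hv : v ∉ ψ '' Set.Iio n) (hfirst : E v (ψ 0)) :
    IsDipath E (n + 1) (seqCons v ψ) := by
  refine ⟨fun a ha b hb hab => ?_, fun i hi => ?_⟩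
  · simp only [Set.mem_Iio] at ha hb
    match a, b, hab with
    | 0, 0, _ => rfl
    | 0, b + 1, hab => exact absurd ⟨b, by simp; omega, hab.symm⟩ hv
    | a + 1, 0, hab => exact absurd ⟨a, by simp; omega, hab⟩ hv
    | a + 1, b + 1, hab => exact congrArg (· + 1) (hψ.1 (by simp; omega) (by simp; omega) hab)
  · match i with
    | 0 => exact hfirst
    | i + 1 => exact hψ.2 i (by omega)

theorem isTransitiveCycle_snoc (hψ : IsDipath E n ψ) (hn : 0 < n) (hv : v ∉ ψ '' Set.Iio n)
    (hfirst : E (ψ 0) v) (hlast : E (ψ (n - 1)) v) :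
    IsTransitiveCycle E (n + 1) (Function.update ψ n v) := by
  refine ⟨hψ.snoc hv hlast, ?_⟩
  simpa [Function.update_apply, hn.ne] using hfirst

theorem isTransitiveCycle_cons (hψ : IsDipath E n ψ) (hn : 0 < n) (hv : v ∉ ψ '' Set.Iio n)
    (hfirst : E v (ψ 0)) (hlast : E v (ψ (n - 1))) :
    IsTransitiveCycle E (n + 1) (seqCons v ψ) := by
  refine ⟨hψ.cons hv hfirst, ?_⟩
  obtain ⟨n, rfl⟩ := Nat.exists_eq_add_of_lt hn
  exact hlast

end Extend

section Cycle

variable {m : ℕ} {c : ℕ → V}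

theorem edge_mod (hc : IsDipath E m c) (hclose : E (c (m - 1)) (c 0)) (hm : 0 < m) (a : ℕ) :
    E (c (a % m)) (c ((a + 1) % m)) := by
  have hsucc : (a + 1) % m = (a % m + 1) % m := (Nat.mod_add_mod a m 1).symm
  rcases Nat.lt_or_ge (a % m + 1) m with h | h
  · rw [hsucc, Nat.mod_eq_of_lt h]
    exact hc.2 _ h
  · have hlast : a % m = m - 1 := by have := Nat.mod_lt a hm; omega
    rwa [hsucc, hlast, Nat.sub_add_cancel hm, Nat.mod_self]

theorem rotate (hc : IsDipath E m c) (hclose : E (c (m - 1)) (c 0)) {j n : ℕ} (hj : j < m)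
    (hn : n ≤ m) : IsDipath E n (fun t => c ((j + t) % m)) := by
  refine ⟨fun a ha b hb hab => ?_, fun i _ => hc.edge_mod hclose (by omega) (j + i)⟩
  simp only [Set.mem_Iio] at ha hb
  have hmod := hc.1 (Set.mem_Iio.2 (Nat.mod_lt (j + a) (by omega)))
    (Set.mem_Iio.2 (Nat.mod_lt (j + b) (by omega))) hab
  have := Nat.ModEq.add_left_cancel' j hmod
  rwa [Nat.ModEq, Nat.mod_eq_of_lt (by omega), Nat.mod_eq_of_lt (by omega)] at this

theorem exists_along_cycle (hc : IsDipath E m c) (hclose : E (c (m - 1)) (c 0)) {i j : ℕ}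
    (hi : i < m) (hj : j < m) (hij : i ≠ j) :
    ∃ n ψ, 2 ≤ n ∧ IsDipath E n ψ ∧ ψ 0 = c j ∧ ψ (n - 1) = c i ∧
      ψ '' Set.Iio n ⊆ c '' Set.Iio m := by
  set d := (i + m - j) % m
  have hd : d < m := Nat.mod_lt _ (by omega)
  have hjd : (j + d) % m = i := by
    rw [Nat.add_mod_mod, show j + (i + m - j) = i + m by omega, Nat.add_mod_right,
      Nat.mod_eq_of_lt hi]
  have hd0 : d ≠ 0 := fun h => hij (by rwa [h, Nat.add_zero, Nat.mod_eq_of_lt hj, eq_comm] at hjd)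
  refine ⟨d + 1, _, by omega, hc.rotate hclose hj (by omega), by simp [Nat.mod_eq_of_lt hj],
    by simp [hjd], ?_⟩
  rintro _ ⟨t, -, rfl⟩
  exact ⟨_, Set.mem_Iio.2 (Nat.mod_lt _ (by omega)), rfl⟩

end Cycle

end IsDipath

end

theorem induced_cycle_neighbours_general {V : Type*} (E : V → V → Prop)
    (m : ℕ) (c : ℕ → V) (hinj : Set.InjOn c (Set.Iio m))
    (hcyc : ∀ i, i + 1 < m → E (c i) (c (i + 1))) (hclose : E (c (m - 1)) (c 0))
    (hTC : ∀ k, 3 ≤ k → ¬ ∃ φ : ℕ → V, Set.InjOn φ (Set.Iio k) ∧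
      (∀ i, i + 1 < k → E (φ i) (φ (i + 1))) ∧ E (φ 0) (φ (k - 1))) :
    ∀ v : V, (∀ i, i < m → v ≠ c i) →
      (∀ i j, i < m → j < m → E (c i) v → E (c j) v → i = j) ∧
      (∀ i j, i < m → j < m → E v (c i) → E v (c j) → i = j) := by
  intro v hv
  have hC : IsDipath E m c := ⟨hinj, hcyc⟩
  have hnoTC : ∀ n φ, 2 ≤ n → ¬ IsTransitiveCycle E (n + 1) φ :=
    fun n φ hn h => hTC (n + 1) (by omega) ⟨φ, h.1.1, h.1.2, h.2⟩
  have hvC : ∀ {n} {ψ : ℕ → V}, ψ '' Set.Iio n ⊆ c '' Set.Iio m → v ∉ ψ '' Set.Iio n :=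
    fun hsub hvψ => by obtain ⟨i, hi, hci⟩ := hsub hvψ; exact hv i hi hci.symm
  constructor
  · intro i j hi hj hiv hjv
    by_contra hij
    obtain ⟨n, ψ, hn, hψ, h0, hlast, hsub⟩ := hC.exists_along_cycle hclose hi hj hij
    exact hnoTC n _ hn
      (hψ.isTransitiveCycle_snoc (by omega) (hvC hsub) (h0 ▸ hjv) (hlast ▸ hiv))
  · intro i j hi hj hiv hjv
    by_contra hij
    obtain ⟨n, ψ, hn, hψ, h0, hlast, hsub⟩ := hC.exists_along_cycle hclose hj hi (Ne.symm hij)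
    exact hnoTC n _ hn
      (hψ.isTransitiveCycle_cons (by omega) (hvC hsub) (h0 ▸ hiv) (hlast ▸ hjv))

/-- Let `D` be a digraph (edge relation `E`) containing an induced oriented cycle
`c 0, c 1, …, c (m-1)` and no transitive cycle `TC_k` for any `k ≥ 3`. Then every
vertex outside the cycle has at most one in-edge from the cycle and at most one
out-edge to the cycle. -/
theorem induced_cycle_neighbours {V : Type*} (E : V → V → Prop)
    (hirr : ∀ v, ¬ E v v)
    (m : ℕ) (hm : 2 ≤ m) (c : ℕ → V) (hinj : Set.InjOn c (Set.Iio m))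
    (hcyc : ∀ i, i + 1 < m → E (c i) (c (i + 1))) (hclose : E (c (m - 1)) (c 0))
    (hind : ∀ i j, i < m → j < m → E (c i) (c j) →
      (j = i + 1 ∨ (i = m - 1 ∧ j = 0)))
    (hTC : ∀ k, 3 ≤ k → ¬ ∃ φ : ℕ → V, Set.InjOn φ (Set.Iio k) ∧
      (∀ i, i + 1 < k → E (φ i) (φ (i + 1))) ∧ E (φ 0) (φ (k - 1))) :
    ∀ v : V, (∀ i, i < m → v ≠ c i) →
      (∀ i j, i < m → j < m → E (c i) v → E (c j) v → i = j) ∧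
      (∀ i j, i < m → j < m → E v (c i) → E v (c j) → i = j) :=
  induced_cycle_neighbours_general E m c hinj hcyc hclose hTC
end

section
/- For any poset P, either there exists a constant K_P such that sat*(n, P) ≤ K_P for all n, or sat*(n, P) ≥ 2√(n-2) for all n ∈ ℕ with n ≥ 2. -/
/-!
Let `F ⊆ 2^[n]` be induced `P`-saturated with `m` members, `m² + 8 < 4n`. Picking, for every
coordinate `i` with `A \ B = {i}` for some `A, B ∈ F`, one such pair `(A, B)` gives a digraph on `F`
with one arc per such coordinate in which no arc can be replaced by a walk through other arcs: the
walk would have to drop `i` somewhere. Such a digraph on `m` vertices has at most `m²/4 + 2` arcs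
(contract a directed 2- or 3-cycle if there is one, which only loses the cycle's own arcs;
otherwise delete both ends of an arc, which meet at most `m - 1` arcs), so some `i ∈ [n]` is not a
singleton difference in `F`. Cloning that coordinate `i` into `n + 1, …, N` keeps `F` induced
`P`-saturated, hence `sat*(N, P) ≤ m` for every `N ≥ n`.
-/

open Finset

theorem Relation.ReflTransGen.exists_exit {γ : Type*} {r : γ → γ → Prop} {p : γ → Prop}
    {a b : γ} (h : Relation.ReflTransGen r a b) (ha : p a) (hb : ¬ p b) :
    ∃ c d, r c d ∧ p c ∧ ¬ p d := by
  induction h with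
  | refl => exact absurd ha hb
  | @tail c d _ hcd ih =>
    by_cases hc : p c
    · exact ⟨c, d, hcd, hc, hb⟩
    · exact ih hc

-- Merging `k` vertices into one loses the `c ≤ k` arcs among them; `e` arcs remain on the
-- `j` vertices left.
theorem four_mul_add_le_of_contract {m k j c e : ℕ} (hk : 2 ≤ k) (hc : c ≤ k)
    (hj : j + k ≤ m + 1) (he : 4 * e ≤ j ^ 2 + 8) (he' : e ≤ j * j - j) :
    4 * (c + e) ≤ m ^ 2 + 8 := by
  obtain ⟨k, rfl⟩ : ∃ k', k = k' + 2 := ⟨k - 2, by omega⟩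
  have hm : (j + k + 1) ^ 2 ≤ m ^ 2 := Nat.pow_le_pow_left (by omega) 2
  have hsq : 2 * k ≤ k ^ 2 + 1 := by nlinarith [Nat.pow_le_pow_left (Nat.le_succ k) 2]
  rcases Nat.lt_or_ge j 4 with hj4 | hj4
  · interval_cases j <;> norm_num at he' he <;> nlinarith [show e ≤ 4 by omega]
  · nlinarith

theorem four_mul_add_le_of_remove {m t e : ℕ} (ht : t ≤ m + 1) (he : 4 * e ≤ m ^ 2 + 8) :
    4 * (t + e) ≤ (m + 2) ^ 2 + 8 := by
  nlinarith

namespace Arcs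

variable {α β : Type*}

abbrev Reach (E : Finset (α × α)) : α → α → Prop := Relation.ReflTransGen fun a b => (a, b) ∈ E

theorem reach_mono {E E' : Finset (α × α)} (h : E ⊆ E') {a b : α} (hab : Reach E a b) :
    Reach E' a b :=
  Relation.ReflTransGen.mono (fun _ _ hx => h hx) a b hab

theorem reach_of_reach_map {D : Finset (α × α)} {E' : Finset (β × β)} (f : α → β)
    (hfib : ∀ x y, f x = f y → Reach D x y) (hlift : ∀ e' ∈ E', ∃ e ∈ D, Prod.map f f e = e')
    {x y : α} (h : Reach E' (f x) (f y)) : Reach D x y := by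
  suffices ∀ y', Reach E' (f x) y' → ∃ z, f z = y' ∧ Reach D x z by
    obtain ⟨z, hz, hxz⟩ := this _ h
    exact hxz.trans (hfib z y hz)
  intro y' h'
  induction h' with
  | refl => exact ⟨x, rfl, .refl⟩
  | @tail b' c' _ hstep ih =>
    obtain ⟨z, rfl, hxz⟩ := ih
    obtain ⟨e, he, hee⟩ := hlift _ hstep
    obtain ⟨h1, h2⟩ := Prod.ext_iff.1 hee
    exact ⟨e.2, h2, (hxz.trans (hfib _ _ h1.symm)).tail he⟩

variable [DecidableEq α]

def Irredundant (E : Finset (α × α)) : Prop := ∀ e ∈ E, ¬ Reach (E.erase e) e.1 e.2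

section Irredundant

variable {E : Finset (α × α)}

theorem Irredundant.mono {E' : Finset (α × α)} (h : Irredundant E') (hE : E ⊆ E') :
    Irredundant E :=
  fun e he hr => h e (hE he) (reach_mono (erase_subset_erase e hE) hr)

theorem Irredundant.fst_ne_snd (h : Irredundant E) {e : α × α} (he : e ∈ E) : e.1 ≠ e.2 :=
  fun hee => h e he (hee ▸ .refl)

theorem Irredundant.eq_of_reach (h : Irredundant E) {a b : α × α} (ha : a ∈ E) (hb : b ∈ E)
    (h1 : Reach (E.erase b) b.1 a.1) (h2 : Reach (E.erase b) a.2 b.2) : a = b := by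
  by_contra hab
  exact h b hb (h1.trans (Relation.ReflTransGen.head (mem_erase.2 ⟨hab, ha⟩) h2))

theorem Irredundant.notMem_of_mem_of_mem (h : Irredundant E) {x y z : α}
    (hxy : (x, y) ∈ E) (hyz : (y, z) ∈ E) : (x, z) ∉ E := fun hxz => by
  have hyz' : (x, y) ≠ (x, z) := fun he => h.fst_ne_snd hyz (Prod.ext_iff.1 he).2
  have := h.eq_of_reach hyz hxz (.single (mem_erase.2 ⟨hyz', hxy⟩)) .refl
  exact h.fst_ne_snd hxy (Prod.ext_iff.1 this).1.symm

theorem Irredundant.card_le_card_offDiag {V : Finset α} (h : Irredundant E)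
    (hE : E ⊆ V ×ˢ V) : #E ≤ #V.offDiag := by
  refine card_le_card fun e he => ?_
  obtain ⟨h1, h2⟩ := mem_product.1 (hE he)
  exact mem_offDiag.2 ⟨h1, h2, h.fst_ne_snd he⟩

end Irredundant

def collapse (W : Finset α) (r x : α) : α := if x ∈ W then r else x

def contract (W : Finset α) (r : α) (E : Finset (α × α)) : Finset (α × α) :=
  (E.filter fun e => ¬ (e.1 ∈ W ∧ e.2 ∈ W)).image (Prod.map (collapse W r) (collapse W r))

section Contract

variable {V W : Finset α} {r : α} {E C : Finset (α × α)}

theorem collapse_mem {x : α} (hx : x ∈ V) : collapse W r x ∈ insert r (V \ W) := by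
  unfold collapse
  split_ifs with hxW
  · exact mem_insert_self r _
  · exact mem_insert_of_mem (mem_sdiff.2 ⟨hx, hxW⟩)

theorem contract_subset (hE : E ⊆ V ×ˢ V) :
    contract W r E ⊆ insert r (V \ W) ×ˢ insert r (V \ W) := by
  intro e' he'
  rw [contract, mem_image] at he'
  obtain ⟨e, he, rfl⟩ := he'
  obtain ⟨h1, h2⟩ := mem_product.1 (hE (mem_filter.1 he).1)
  exact mem_product.2 ⟨collapse_mem h1, collapse_mem h2⟩

theorem eq_or_mem_of_collapse_eq (hr : r ∈ W) {x y : α} (h : collapse W r x = collapse W r y) :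
    x = y ∨ (x ∈ W ∧ y ∈ W) := by
  unfold collapse at h
  split_ifs at h with hx hy hy
  · exact .inr ⟨hx, hy⟩
  · exact absurd (h ▸ hr) hy
  · exact absurd (h ▸ hr) hx
  · exact .inl h

variable (hr : r ∈ W) (hCW : C ⊆ W ×ˢ W) (hCE : C ⊆ E)
  (hconn : ∀ x ∈ W, Reach C x r ∧ Reach C r x)
include hCE hconn

include hr hCW in
/-- An arc `b` not inside `W` is not in `C`, so `W` stays connected without it. -/
theorem reach_erase_of_collapse_eq {b : α × α} (hb : ¬ (b.1 ∈ W ∧ b.2 ∈ W)) {x y : α}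
    (h : collapse W r x = collapse W r y) : Reach (E.erase b) x y := by
  rcases eq_or_mem_of_collapse_eq hr h with rfl | ⟨hx, hy⟩
  · exact .refl
  · have hC : C ⊆ E.erase b := fun e he =>
      mem_erase.2 ⟨fun heb => hb (heb ▸ mem_product.1 (hCW he)), hCE he⟩
    exact reach_mono hC ((hconn x hx).1.trans (hconn y hy).2)

theorem Irredundant.filter_inside_subset (h : Irredundant E) :
    E.filter (fun e => e.1 ∈ W ∧ e.2 ∈ W) ⊆ C := by
  intro e he
  obtain ⟨heE, h1, h2⟩ := mem_filter.1 he
  by_contra heC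
  have hC : C ⊆ E.erase e := fun c hc => mem_erase.2 ⟨fun hce => heC (hce ▸ hc), hCE hc⟩
  exact h e heE (reach_mono hC ((hconn _ h1).1.trans (hconn _ h2).2))

include hr hCW in
theorem Irredundant.card_le_card_add_card_contract (h : Irredundant E) :
    #E ≤ #C + #(contract W r E) := by
  have hinj : Set.InjOn (Prod.map (collapse W r) (collapse W r))
      ↑(E.filter fun e : α × α => ¬ (e.1 ∈ W ∧ e.2 ∈ W)) := by
    intro a ha b hb hab
    obtain ⟨haE, -⟩ := mem_filter.1 (mem_coe.1 ha)
    obtain ⟨hbE, hbW⟩ := mem_filter.1 (mem_coe.1 hb)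
    obtain ⟨h1, h2⟩ := Prod.ext_iff.1 hab
    exact h.eq_of_reach haE hbE
      (reach_erase_of_collapse_eq hr hCW hCE hconn hbW h1.symm)
      (reach_erase_of_collapse_eq hr hCW hCE hconn hbW h2)
  rw [contract, card_image_of_injOn hinj, ← card_filter_add_card_filter_not
    (fun e : α × α => e.1 ∈ W ∧ e.2 ∈ W)]
  exact Nat.add_le_add_right (card_le_card (h.filter_inside_subset hCE hconn)) _

include hr hCW in
theorem Irredundant.contract (h : Irredundant E) : Irredundant (contract W r E) := by
  intro e' he' hreach
  obtain ⟨e, he, rfl⟩ := mem_image.1 (by rwa [Arcs.contract] at he')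
  obtain ⟨heE, heW⟩ := mem_filter.1 he
  refine h e heE (reach_of_reach_map (collapse W r)
    (fun x y => reach_erase_of_collapse_eq hr hCW hCE hconn heW) (fun f' hf' => ?_) hreach)
  obtain ⟨hne, hf'⟩ := mem_erase.1 hf'
  obtain ⟨f, hf, rfl⟩ := mem_image.1 (by rwa [Arcs.contract] at hf')
  exact ⟨f, mem_erase.2 ⟨fun hfe => hne (hfe ▸ rfl), (mem_filter.1 hf).1⟩, rfl⟩

end Contract

section Bound

variable {V : Finset α} {E : Finset (α × α)}

theorem Irredundant.four_mul_card_le_of_contract {W : Finset α} {C : Finset (α × α)} {r : α}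
    (h : Irredundant E) (hE : E ⊆ V ×ˢ V) (hWV : W ⊆ V) (hW : 2 ≤ #W) (hC : #C ≤ #W)
    (hr : r ∈ W) (hCW : C ⊆ W ×ˢ W) (hCE : C ⊆ E) (hconn : ∀ x ∈ W, Reach C x r ∧ Reach C r x)
    (ih : ∀ V' ⊂ V, ∀ {E' : Finset (α × α)}, Irredundant E' → E' ⊆ V' ×ˢ V' →
      4 * #E' ≤ #V' ^ 2 + 8) :
    4 * #E ≤ #V ^ 2 + 8 := by
  have hV' : #(insert r (V \ W)) + #W ≤ #V + 1 := by
    have := card_insert_le r (V \ W)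
    have := card_sdiff_of_subset hWV
    have := card_le_card hWV
    omega
  have hsub : insert r (V \ W) ⊂ V := by
    refine ssubset_of_subset_of_ne (insert_subset (hWV hr) sdiff_subset) fun heq => ?_
    rw [heq] at hV'
    omega
  have hE' := contract_subset (W := W) (r := r) hE
  have h' := h.contract hr hCW hCE hconn
  have := h.card_le_card_add_card_contract hr hCW hCE hconn
  have := four_mul_add_le_of_contract hW hC hV' (ih _ hsub h' hE')
    (offDiag_card _ ▸ h'.card_le_card_offDiag hE')
  omega

theorem Irredundant.card_arcs_at_le_one {u v : α} (h : Irredundant E) (huv : (u, v) ∈ E)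
    (h2 : ∀ x y, (x, y) ∈ E → (y, x) ∉ E) (h3 : ∀ x, (v, x) ∈ E → (x, u) ∉ E) (x : α) :
    #(E ∩ {(x, u), (x, v), (u, x), (v, x)}) ≤ 1 := card_le_one.2 fun a ha b hb => by
  obtain ⟨ha, ha'⟩ := mem_inter.1 ha
  obtain ⟨hb, hb'⟩ := mem_inter.1 hb
  simp only [mem_insert, mem_singleton] at ha' hb'
  rcases ha' with rfl | rfl | rfl | rfl <;> rcases hb' with rfl | rfl | rfl | rfl <;>
    first
    | rfl
    | exact absurd hb (h2 _ _ ha)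
    | exact absurd hb (h3 _ ha)
    | exact absurd ha (h3 _ hb)
    | exact absurd hb (h.notMem_of_mem_of_mem ha huv)
    | exact absurd ha (h.notMem_of_mem_of_mem hb huv)
    | exact absurd huv (h.notMem_of_mem_of_mem ha hb)
    | exact absurd huv (h.notMem_of_mem_of_mem hb ha)
    | exact absurd hb (h.notMem_of_mem_of_mem huv ha)
    | exact absurd ha (h.notMem_of_mem_of_mem huv hb)

theorem Irredundant.card_filter_incident_le {u v : α} (h : Irredundant E) (hE : E ⊆ V ×ˢ V)
    (huv : (u, v) ∈ E) (h2 : ∀ x y, (x, y) ∈ E → (y, x) ∉ E)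
    (h3 : ∀ x, (v, x) ∈ E → (x, u) ∉ E) :
    #(E.filter fun e => e.1 ∈ ({u, v} : Finset α) ∨ e.2 ∈ ({u, v} : Finset α)) ≤
      #(V \ {u, v}) + 1 := by
  set arcsAt : α → Finset (α × α) := fun x => E ∩ {(x, u), (x, v), (u, x), (v, x)}
  have hsub : (E.filter fun e => e.1 ∈ ({u, v} : Finset α) ∨ e.2 ∈ ({u, v} : Finset α)) ⊆
      insert (u, v) ((V \ {u, v}).biUnion arcsAt) := by
    rintro ⟨a, b⟩ hab
    obtain ⟨habE, hab⟩ := mem_filter.1 hab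
    obtain ⟨ha, hb⟩ := mem_product.1 (hE habE)
    have hne : a ≠ b := h.fst_ne_snd habE
    have hvu : (v, u) ∉ E := h2 _ _ huv
    rw [mem_insert, mem_biUnion]
    by_cases heq : (a, b) = (u, v)
    · exact .inl heq
    simp only [mem_insert, mem_singleton] at hab
    rcases hab with (rfl | rfl) | (rfl | rfl)
    · exact .inr ⟨b, by grind, by simp [arcsAt, habE]⟩
    · exact .inr ⟨b, by grind, by simp [arcsAt, habE]⟩
    · exact .inr ⟨a, by grind, by simp [arcsAt, habE]⟩
    · exact .inr ⟨a, by grind, by simp [arcsAt, habE]⟩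
  have := card_biUnion_le_card_mul (V \ {u, v}) arcsAt 1 fun x _ =>
    h.card_arcs_at_le_one huv h2 h3 x
  have := (card_le_card hsub).trans (card_insert_le _ _)
  omega

theorem Irredundant.four_mul_card_le_of_remove {u v : α} (h : Irredundant E)
    (hE : E ⊆ V ×ˢ V) (huv : (u, v) ∈ E) (h2 : ∀ x y, (x, y) ∈ E → (y, x) ∉ E)
    (h3 : ∀ x, (v, x) ∈ E → (x, u) ∉ E)
    (ih : ∀ V' ⊂ V, ∀ {E' : Finset (α × α)}, Irredundant E' → E' ⊆ V' ×ˢ V' →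
      4 * #E' ≤ #V' ^ 2 + 8) :
    4 * #E ≤ #V ^ 2 + 8 := by
  set D : Finset α := {u, v}
  obtain ⟨hu, hv⟩ := mem_product.1 (hE huv)
  have hD : D ⊆ V := by simp [D, insert_subset_iff, hu, hv]
  have hVD : #(V \ D) + 2 = #V := by
    have := card_le_card hD
    rw [card_sdiff_of_subset hD, card_pair_eq_two_iff.2 (h.fst_ne_snd huv)] at *
    omega
  have hrest : (E.filter fun e => ¬ (e.1 ∈ D ∨ e.2 ∈ D)) ⊆ (V \ D) ×ˢ (V \ D) := by
    intro e he
    obtain ⟨heE, he⟩ := mem_filter.1 he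
    obtain ⟨h1, h2⟩ := mem_product.1 (hE heE)
    push Not at he
    exact mem_product.2 ⟨mem_sdiff.2 ⟨h1, he.1⟩, mem_sdiff.2 ⟨h2, he.2⟩⟩
  have := ih _ (sdiff_ssubset hD ⟨u, by simp [D]⟩) (h.mono (filter_subset _ _)) hrest
  have := h.card_filter_incident_le hE huv h2 h3
  rw [← card_filter_add_card_filter_not (fun e : α × α => e.1 ∈ D ∨ e.2 ∈ D), ← hVD]
  exact four_mul_add_le_of_remove this ‹_›

theorem Irredundant.four_mul_card_le (h : Irredundant E) (hE : E ⊆ V ×ˢ V) :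
    4 * #E ≤ #V ^ 2 + 8 := by
  induction V using Finset.strongInduction generalizing E with
  | H V ih =>
  by_cases h2 : ∃ u v, (u, v) ∈ E ∧ (v, u) ∈ E
  · obtain ⟨u, v, huv, hvu⟩ := h2
    obtain ⟨hu, hv⟩ := mem_product.1 (hE huv)
    have hW : #{u, v} = 2 := card_pair_eq_two_iff.2 (h.fst_ne_snd huv)
    refine h.four_mul_card_le_of_contract (W := {u, v}) (C := {(u, v), (v, u)}) (r := u) hE
      (by simp [insert_subset_iff, hu, hv]) hW.ge (card_le_two.trans hW.ge) (by simp)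
      (by simp [insert_subset_iff]) (by simp [insert_subset_iff, huv, hvu]) ?_ ih
    simp only [mem_insert, mem_singleton, forall_eq_or_imp, forall_eq]
    exact ⟨⟨.refl, .refl⟩, .single (by simp), .single (by simp)⟩
  push Not at h2
  rcases E.eq_empty_or_nonempty with rfl | ⟨⟨u, v⟩, huv⟩
  · simp
  by_cases h3 : ∃ x, (v, x) ∈ E ∧ (x, u) ∈ E
  · obtain ⟨x, hvx, hxu⟩ := h3
    obtain ⟨hu, hv⟩ := mem_product.1 (hE huv)
    have hx := (mem_product.1 (hE hxu)).1
    have hW : #{u, v, x} = 3 := card_eq_three.2 ⟨u, v, x, h.fst_ne_snd huv,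
      (h.fst_ne_snd hxu).symm, h.fst_ne_snd hvx, rfl⟩
    refine h.four_mul_card_le_of_contract (W := {u, v, x}) (C := {(u, v), (v, x), (x, u)})
      (r := u) hE (by simp [insert_subset_iff, hu, hv, hx]) (by omega)
      (card_le_three.trans hW.ge) (by simp) (by simp [insert_subset_iff])
      (by simp [insert_subset_iff, huv, hvx, hxu]) ?_ ih
    simp only [mem_insert, mem_singleton, forall_eq_or_imp, forall_eq]
    exact ⟨⟨.refl, .refl⟩, ⟨.head (b := x) (by simp) (.single (by simp)), .single (by simp)⟩,
      .single (by simp), .head (b := v) (by simp) (.single (by simp))⟩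
  push Not at h3
  exact h.four_mul_card_le_of_remove hE huv h2 h3 ih

end Bound

end Arcs

theorem four_mul_card_le_of_forall_sdiff_eq_singleton {α : Type*} [DecidableEq α]
    (F : Finset (Finset α)) (I : Finset α) (h : ∀ i ∈ I, ∃ A ∈ F, ∃ B ∈ F, A \ B = {i}) :
    4 * #I ≤ #F ^ 2 + 8 := by
  choose! A hA B hB hAB using h
  have hlabel : ∀ i ∈ I, ∀ j ∈ I, i ∈ A j → i ∉ B j → i = j := fun i _ j hj hiA hiB =>
    mem_singleton.1 (hAB j hj ▸ mem_sdiff.2 ⟨hiA, hiB⟩)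
  have hmem : ∀ i ∈ I, i ∈ A i ∧ i ∉ B i := fun i hi =>
    mem_sdiff.1 ((hAB i hi).symm ▸ mem_singleton_self i)
  set E := I.image fun i => (A i, B i)
  have hinj : Set.InjOn (fun i => (A i, B i)) I := fun i hi j hj hij => by
    obtain ⟨hiA, hiB⟩ := hmem i hi
    obtain ⟨h1, h2⟩ := Prod.mk.inj hij
    exact hlabel i hi j hj (h1 ▸ hiA) (h2 ▸ hiB)
  -- a walk from `A i` to `B i` must use an arc that drops `i`, and only the arc of `i` does
  have hE : Arcs.Irredundant E := by
    intro e he hreach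
    obtain ⟨i, hi, rfl⟩ := mem_image.1 he
    obtain ⟨c, d, hcd, hic, hid⟩ :=
      hreach.exists_exit (p := (i ∈ ·)) (hmem i hi).1 (hmem i hi).2
    obtain ⟨hne, hcdE⟩ := mem_erase.1 hcd
    obtain ⟨j, hj, hjcd⟩ := mem_image.1 hcdE
    obtain ⟨rfl, rfl⟩ := Prod.ext_iff.1 hjcd
    exact hne (hlabel i hi j hj hic hid ▸ rfl)
  have hEF : E ⊆ F ×ˢ F := fun e he => by
    obtain ⟨i, hi, rfl⟩ := mem_image.1 he
    exact mem_product.2 ⟨hA i hi, hB i hi⟩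
  rw [← card_image_of_injOn hinj]
  exact hE.four_mul_card_le hEF

theorem ContainsInduced.map {P G G' : Finset (Finset ℕ)} (f : Finset ℕ → Finset ℕ)
    (hG : ContainsInduced P G) (hfG : ∀ A ∈ G, f A ∈ G')
    (hf : ∀ A ∈ G, ∀ B ∈ G, f A ⊆ f B ↔ A ⊆ B) : ContainsInduced P G' := by
  obtain ⟨φ, hinj, hmem, hiff⟩ := hG
  refine ⟨f ∘ φ, fun A hA B hB hAB => hinj hA hB ?_, fun A hA => hfG _ (hmem A hA),
    fun A hA B hB => (hf _ (hmem A hA) _ (hmem B hB)).trans (hiff A hA B hB)⟩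
  have hAB : f (φ A) = f (φ B) := hAB
  exact subset_antisymm ((hf _ (hmem A hA) _ (hmem B hB)).1 hAB.subset)
    ((hf _ (hmem B hB) _ (hmem A hA)).1 hAB.symm.subset)

section Blowup

variable {α : Type*} [DecidableEq α] {i : α} {I J A B C S : Finset α}

/-- Coordinate `i` is cloned into every coordinate of `J`. -/
def blowup (i : α) (J A : Finset α) : Finset α := if i ∈ A then A ∪ J else A

theorem blowup_inter (hIJ : Disjoint I J) (hA : A ⊆ I) : blowup i J A ∩ I = A := by
  unfold blowup
  split_ifs
  · rw [union_inter_distrib_right, inter_eq_left.2 hA, disjoint_iff_inter_eq_empty.1 hIJ.symm,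
      union_empty]
  · exact inter_eq_left.2 hA

theorem blowup_subset_blowup_iff (hIJ : Disjoint I J) (hA : A ⊆ I) (hB : B ⊆ I) :
    blowup i J A ⊆ blowup i J B ↔ A ⊆ B := by
  refine ⟨fun h => ?_, fun h => ?_⟩
  · rw [← blowup_inter (i := i) hIJ hA, ← blowup_inter (i := i) hIJ hB]
    exact inter_subset_inter_right h
  · unfold blowup
    split_ifs with hiA hiB hiB
    · exact union_subset_union h subset_rfl
    · exact absurd (h hiA) hiB
    · exact h.trans subset_union_left
    · exact h

theorem blowup_subset_union (hA : A ⊆ I) : blowup i J A ⊆ I ∪ J := by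
  unfold blowup
  split_ifs
  · exact union_subset_union hA subset_rfl
  · exact hA.trans subset_union_left

theorem blowup_inter_self (hi : i ∈ I) (hS : S ⊆ I ∪ J) (h : ∀ j ∈ J, j ∈ S ↔ i ∈ S) :
    blowup i J (S ∩ I) = S := by
  unfold blowup
  by_cases hiS : i ∈ S
  · rw [if_pos (mem_inter.2 ⟨hiS, hi⟩)]
    grind
  · rw [if_neg fun h => hiS (mem_inter.1 h).1]
    exact inter_eq_left.2 fun x hx =>
      (mem_union.1 (hS hx)).resolve_right fun hxJ => hiS ((h x hxJ).1 hx)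

theorem blowup_subset_iff_of_mixed (hmix : ¬ ∀ j ∈ J, j ∈ S ↔ i ∈ S) (hC : C ⊆ I) :
    blowup i J C ⊆ S ↔ C ⊆ (S ∩ I).erase i := by
  by_cases hiC : i ∈ C
  · simp only [blowup, if_pos hiC, union_subset_iff]
    refine iff_of_false (fun h => hmix fun j hj => iff_of_true (h.2 hj) (h.1 hiC)) fun h => ?_
    simpa using h hiC
  · simp only [blowup, if_neg hiC]
    exact ⟨fun h x hx => mem_erase.2 ⟨fun hxi => hiC (hxi ▸ hx), mem_inter.2 ⟨h hx, hC hx⟩⟩,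
      fun h => h.trans ((erase_subset _ _).trans inter_subset_left)⟩

theorem subset_blowup_iff_of_mixed (hIJ : Disjoint I J) (hmix : ¬ ∀ j ∈ J, j ∈ S ↔ i ∈ S)
    (hS : S ⊆ I ∪ J) (hC : C ⊆ I) :
    S ⊆ blowup i J C ↔ insert i ((S ∩ I).erase i) ⊆ C := by
  by_cases hiC : i ∈ C
  · simp only [blowup, insert_subset_iff, hiC, true_and]
    constructor
    · intro h x hx
      obtain ⟨-, hxS, hxI⟩ := by simpa using hx
      exact (mem_union.1 (h hxS)).resolve_right (disjoint_left.1 hIJ hxI)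
    · intro h x hxS
      rcases mem_union.1 (hS hxS) with hxI | hxJ
      · by_cases hxi : x = i
        · exact mem_union_left _ (hxi ▸ hiC)
        · exact mem_union_left _ (h (by simp [hxi, hxS, hxI]))
      · exact mem_union_right _ hxJ
  · simp only [blowup, insert_subset_iff, hiC, false_and, iff_false]
    exact fun h => hmix fun j hj =>
      iff_of_false (fun hjS => disjoint_left.1 hIJ (hC (h hjS)) hj) fun hiS => hiC (h hiS)

/-- A set `S` that is not a blow-up compares with blow-ups like `(S ∩ I) \ {i}` or like
`insert i ((S ∩ I) \ {i})`; since `i` is not a singleton difference in `F`, one of them is not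
in `F`. -/
theorem exists_pullback_of_notMem_image_blowup {F : Finset (Finset α)} (hIJ : Disjoint I J)
    (hi : i ∈ I) (hF : ∀ A ∈ F, A ⊆ I)
    (hgood : ∀ A ∈ F, ∀ B ∈ F, A \ B ≠ {i}) (hS : S ⊆ I ∪ J) (hSF : S ∉ F.image (blowup i J)) :
    ∃ T ⊆ I, T ∉ F ∧ ∀ C ∈ F, (C ⊆ T ↔ blowup i J C ⊆ S) ∧ (T ⊆ C ↔ S ⊆ blowup i J C) := by
  by_cases hcompat : ∀ j ∈ J, j ∈ S ↔ i ∈ S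
  · have hT := blowup_inter_self hi hS hcompat
    refine ⟨S ∩ I, inter_subset_right, fun hT' => hSF (mem_image.2 ⟨_, hT', hT⟩), fun C hC => ?_⟩
    exact ⟨(blowup_subset_blowup_iff hIJ (hF C hC) inter_subset_right).symm.trans (by rw [hT]),
      (blowup_subset_blowup_iff hIJ inter_subset_right (hF C hC)).symm.trans (by rw [hT])⟩
  set X := (S ∩ I).erase i
  have hX : X ⊆ I := (erase_subset _ _).trans inter_subset_right
  by_cases hlow : ∃ C ∈ F, i ∈ C ∧ C ⊆ insert i X
  · obtain ⟨C₀, hC₀, hiC₀, hC₀X⟩ := hlow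
    -- `C₀ \ C = {i}` would follow from `X ⊆ C` and `i ∉ C`
    have hup : ∀ C ∈ F, X ⊆ C → i ∈ C := fun C hC hXC => by
      by_contra hiC
      refine hgood C₀ hC₀ C hC (eq_singleton_iff_unique_mem.2 ⟨mem_sdiff.2 ⟨hiC₀, hiC⟩, ?_⟩)
      intro x hx
      obtain ⟨hxC₀, hxC⟩ := mem_sdiff.1 hx
      exact (mem_insert.1 (hC₀X hxC₀)).resolve_right fun hxX => hxC (hXC hxX)
    refine ⟨X, hX, fun hXF => notMem_erase i _ (hup X hXF subset_rfl), fun C hC => ?_⟩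
    rw [blowup_subset_iff_of_mixed hcompat (hF C hC),
      subset_blowup_iff_of_mixed hIJ hcompat hS (hF C hC), insert_subset_iff]
    exact ⟨.rfl, fun hXC => ⟨hup C hC hXC, hXC⟩, And.right⟩
  · push Not at hlow
    refine ⟨insert i X, insert_subset hi hX, fun hF' => hlow _ hF' (mem_insert_self i X) subset_rfl,
      fun C hC => ?_⟩
    rw [blowup_subset_iff_of_mixed hcompat (hF C hC),
      subset_blowup_iff_of_mixed hIJ hcompat hS (hF C hC)]
    refine ⟨⟨fun h x hx => ?_, fun h => h.trans (subset_insert i X)⟩, .rfl⟩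
    exact (mem_insert.1 (h hx)).resolve_left fun hxi => hlow C hC (hxi ▸ hx) h

theorem blowup_injOn (hIJ : Disjoint I J) :
    Set.InjOn (blowup i J) {A | A ⊆ I} := fun _ hA _ hB h =>
  subset_antisymm ((blowup_subset_blowup_iff hIJ hA hB).1 h.subset)
    ((blowup_subset_blowup_iff hIJ hB hA).1 h.symm.subset)

end Blowup

section Saturated

variable {n N : ℕ} {P F : Finset (Finset ℕ)}

theorem InducedSaturated.image_blowup (hsat : InducedSaturated n P F) {i : ℕ} (hi : i ∈ Icc 1 n)
    (hgood : ∀ A ∈ F, ∀ B ∈ F, A \ B ≠ {i}) (hN : n ≤ N) :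
    InducedSaturated N P (F.image (blowup i (Icc (n + 1) N))) := by
  obtain ⟨hF, hfree, hins⟩ := hsat
  set I := Icc 1 n
  set J := Icc (n + 1) N
  have hIJ : Disjoint I J := disjoint_left.2 fun x hx hx' => by
    simp only [I, J, mem_Icc] at hx hx'
    omega
  have hIJN : I ∪ J = Icc 1 N := by
    ext x
    simp only [I, J, mem_union, mem_Icc]
    omega
  refine ⟨fun A hA => ?_, fun hcopy => hfree ?_, fun S hS hSF => ?_⟩
  · obtain ⟨C, hC, rfl⟩ := mem_image.1 hA
    exact hIJN ▸ blowup_subset_union (hF C hC)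
  · refine hcopy.map (· ∩ I) (fun A hA => ?_) fun A hA B hB => ?_
    · obtain ⟨C, hC, rfl⟩ := mem_image.1 hA
      rwa [blowup_inter hIJ (hF C hC)]
    · obtain ⟨C, hC, rfl⟩ := mem_image.1 hA
      obtain ⟨D, hD, rfl⟩ := mem_image.1 hB
      rw [blowup_inter hIJ (hF C hC), blowup_inter hIJ (hF D hD),
        blowup_subset_blowup_iff hIJ (hF C hC) (hF D hD)]
  obtain ⟨T, hTI, hTF, hT⟩ :=
    exists_pullback_of_notMem_image_blowup hIJ hi hF hgood (hIJN ▸ hS) hSF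
  have hmem : ∀ C ∈ insert T F, C ≠ T → C ∈ F := fun C hC h => (mem_insert.1 hC).resolve_left h
  refine (hins T hTI hTF).map (fun C => if C = T then S else blowup i J C) (fun C hC => ?_)
    fun C hC D hD => ?_
  · split_ifs with hCT
    · exact mem_insert_self S _
    · exact mem_insert_of_mem (mem_image_of_mem _ (hmem C hC hCT))
  by_cases hCT : C = T <;> by_cases hDT : D = T
  · simp [hCT, hDT]
  · simp only [if_neg hDT, hCT]
    exact (hT D (hmem D hD hDT)).2.symm
  · simp only [if_neg hCT, hDT]
    exact (hT C (hmem C hC hCT)).1.symm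
  · simp only [if_neg hCT, if_neg hDT]
    exact blowup_subset_blowup_iff hIJ (hF C (hmem C hC hCT)) (hF D (hmem D hD hDT))

theorem InducedSaturated.satStar_le_card_of_le (hsat : InducedSaturated n P F) {i : ℕ}
    (hi : i ∈ Icc 1 n) (hgood : ∀ A ∈ F, ∀ B ∈ F, A \ B ≠ {i}) (hN : n ≤ N) :
    satStar N P ≤ #F := by
  have hIJ : Disjoint (Icc 1 n) (Icc (n + 1) N) := disjoint_left.2 fun x hx hx' => by
    simp only [mem_Icc] at hx hx'
    omega
  rw [← card_image_of_injOn ((blowup_injOn (i := i) hIJ).mono fun A hA => hsat.1 A hA)]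
  exact Nat.sInf_le ⟨_, hsat.image_blowup hi hgood hN, rfl⟩

theorem exists_inducedSaturated (hP : P.Nonempty) (n : ℕ) : ∃ F, InducedSaturated n P F := by
  classical
  set G := (Icc 1 n).powerset.powerset.filter fun F => ¬ ContainsInduced P F
  have hempty : ∅ ∈ G := by
    refine mem_filter.2 ⟨empty_mem_powerset _, fun ⟨φ, _, hφ, _⟩ => ?_⟩
    obtain ⟨A, hA⟩ := hP
    exact notMem_empty _ (hφ A hA)
  obtain ⟨F, hFG, hmax⟩ := G.exists_max_image card ⟨∅, hempty⟩
  obtain ⟨hFn, hFfree⟩ := mem_filter.1 hFG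
  refine ⟨F, fun A hA => mem_powerset.1 (mem_powerset.1 hFn hA), hFfree, fun S hS hSF => ?_⟩
  by_contra hfree
  have := hmax (insert S F) (mem_filter.2
    ⟨mem_powerset.2 (insert_subset (mem_powerset.2 hS) (mem_powerset.1 hFn)), hfree⟩)
  rw [card_insert_of_notMem hSF] at this
  omega

theorem exists_inducedSaturated_card_eq_satStar (hP : P.Nonempty) (n : ℕ) :
    ∃ F, InducedSaturated n P F ∧ #F = satStar n P :=
  let ⟨F, hF⟩ := exists_inducedSaturated hP n
  Nat.sInf_mem (s := {k | ∃ F, InducedSaturated n P F ∧ #F = k}) ⟨_, F, hF, rfl⟩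

-- Every family contains the empty poset, so none is saturated and `satStar` is `sInf ∅ = 0`.
theorem satStar_empty (n : ℕ) : satStar n ∅ = 0 := by
  have : ∀ F, ContainsInduced ∅ F := fun F => ⟨id, by simp, by simp, by simp⟩
  simp [satStar, InducedSaturated, this]

end Saturated

theorem sq_add_eight_lt_of_lt_two_mul_sqrt {m n : ℕ} (h : (m : ℝ) < 2 * √((n : ℝ) - 2)) :
    m ^ 2 + 8 < 4 * n := by
  have h' := (Real.lt_sqrt (by positivity)).1 (show (m / 2 : ℝ) < √((n : ℝ) - 2) by linarith)
  have : ((m ^ 2 + 8 : ℕ) : ℝ) < (4 * n : ℕ) := by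
    push_cast
    nlinarith
  exact_mod_cast this

theorem exists_forall_le_of_forall_ge {f : ℕ → ℕ} {n₀ m : ℕ} (h : ∀ N, n₀ ≤ N → f N ≤ m) :
    ∃ K, ∀ N, f N ≤ K := by
  refine ⟨max m ((range n₀).sup f), fun N => ?_⟩
  rcases le_or_gt n₀ N with hN | hN
  · exact le_max_of_le_left (h N hN)
  · exact le_max_of_le_right (le_sup (mem_range.2 hN))

/-- For any poset `P`, either `sat*(n, P)` is bounded by a constant, or
`sat*(n, P) ≥ 2√(n-2)` for all `n ≥ 2`. -/
theorem main_dichotomy (P : Finset (Finset ℕ)) :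
    (∃ K : ℕ, ∀ n : ℕ, satStar n P ≤ K) ∨
    (∀ n : ℕ, 2 ≤ n → (satStar n P : ℝ) ≥ 2 * Real.sqrt ((n : ℝ) - 2)) := by
  rcases P.eq_empty_or_nonempty with rfl | hP
  · exact .inl ⟨0, fun n => (satStar_empty n).le⟩
  refine or_iff_not_imp_right.2 fun hsmall => ?_
  push Not at hsmall
  obtain ⟨n, -, hlt⟩ := hsmall
  obtain ⟨F, hF, hcard⟩ := exists_inducedSaturated_card_eq_satStar hP n
  obtain ⟨i, hi, hgood⟩ : ∃ i ∈ Icc 1 n, ∀ A ∈ F, ∀ B ∈ F, A \ B ≠ {i} := by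
    by_contra! h
    have := four_mul_card_le_of_forall_sdiff_eq_singleton F (Icc 1 n) h
    have := sq_add_eight_lt_of_lt_two_mul_sqrt (hcard ▸ hlt)
    simp only [Nat.card_Icc, add_tsub_cancel_right] at *
    omega
  exact exists_forall_le_of_forall_ge fun N hN => hF.satStar_le_card_of_le hi hgood hN
end
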